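/- arXiv:1911.04991 — 2 statements merged into one kernel-verified Lean document; each statement's English description precedes it below -/
import Mathlib

section
/- Let X be a nonempty set, G ≤ S_X and F = N_{S_X}(G), acting on the set of rack folders over G by (λ_x : x ∈ X/G)·f = (κ_x : x ∈ X/G) with κ_x = f⁻¹ (g_y⁻¹ λ_{y g_y⁻¹} g_y) f, y = xf⁻¹. If an orbit of F on the set of rack folders over G contains a rack envelope, then every folder in that orbit is a rack envelope; the same holds with 'quandle' in place of 'rack'. -/
/-- A rack: a binary operation with bijective left translations satisfying the left
self-distributive law. -/
structure RackStr (X : Type*) where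
  op : X → X → X
  bij : ∀ x, Function.Bijective (op x)
  self_distrib : ∀ x y z, op x (op y z) = op (op x y) (op x z)

/-- A quandle: an idempotent rack. -/
structure QuandleStr (X : Type*) extends RackStr X where
  idem : ∀ x, op x x = x

namespace RackStr

variable {X : Type*}

/-- The left translation `L_x : y ↦ x * y`, as a permutation of `X`. -/
noncomputable def L (Q : RackStr X) (x : X) : Equiv.Perm X :=
  Equiv.ofBijective (Q.op x) (Q.bij x)

/-- The left multiplication group `Lmlt(X,*) = ⟨L_x : x ∈ X⟩ ≤ S_X`. -/
noncomputable def lmlt (Q : RackStr X) : Subgroup (Equiv.Perm X) :=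
  Subgroup.closure (Set.range Q.L)

end RackStr

/-- `R` is a complete set of representatives of the orbits of `G ≤ S_X` on `X`:
every `y ∈ X` lies in the orbit of a unique element of `R`. -/
def IsTransversal {X : Type*} (G : Subgroup (Equiv.Perm X)) (R : Set X) : Prop :=
  ∀ y : X, ∃! x : X, x ∈ R ∧ ∃ g ∈ G, g • y = x

/-- The stabilizer `G_x` of `x` in `G`, as a subgroup of `S_X`. -/
def stabIn {X : Type*} (G : Subgroup (Equiv.Perm X)) (x : X) : Subgroup (Equiv.Perm X) :=
  G ⊓ MulAction.stabilizer (Equiv.Perm X) x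

/-- The centralizer `C_G(G_x)` of the stabilizer `G_x` in `G`, as a subgroup of `S_X`. -/
def cgStab {X : Type*} (G : Subgroup (Equiv.Perm X)) (x : X) : Subgroup (Equiv.Perm X) :=
  G ⊓ Subgroup.centralizer (stabIn G x : Set (Equiv.Perm X))

/-- The center `Z(G_x)` of the stabilizer `G_x`, as a subgroup of `S_X`. -/
def zStab {X : Type*} (G : Subgroup (Equiv.Perm X)) (x : X) : Subgroup (Equiv.Perm X) :=
  stabIn G x ⊓ Subgroup.centralizer (stabIn G x : Set (Equiv.Perm X))

/-- The conjugacy class `a^G = { g⁻¹ a g : g ∈ G }` of `a` under `G`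
(written in left-action convention). -/
def conjClassOf {X : Type*} (G : Subgroup (Equiv.Perm X)) (a : Equiv.Perm X) :
    Set (Equiv.Perm X) :=
  {h | ∃ g ∈ G, h = g * a * g⁻¹}

/-- A rack folder over `G`: a tuple `(λ_x : x ∈ R)` with `λ_x ∈ C_G(G_x)`. -/
def IsRackFolder {X : Type*} (G : Subgroup (Equiv.Perm X)) (R : Set X)
    (Λ : R → Equiv.Perm X) : Prop :=
  ∀ x : R, Λ x ∈ cgStab G (x : X)

/-- A quandle folder over `G`: a tuple `(λ_x : x ∈ R)` with `λ_x ∈ Z(G_x)`. -/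
def IsQuandleFolder {X : Type*} (G : Subgroup (Equiv.Perm X)) (R : Set X)
    (Λ : R → Equiv.Perm X) : Prop :=
  ∀ x : R, Λ x ∈ zStab G (x : X)

/-- The envelope condition: `⟨⋃_{x ∈ R} λ_x^G⟩ = G`. -/
def GeneratesG {X : Type*} (G : Subgroup (Equiv.Perm X)) (R : Set X)
    (Λ : R → Equiv.Perm X) : Prop :=
  Subgroup.closure (⋃ x : R, conjClassOf G (Λ x)) = G

/-- The action of `f ∈ N_{S_X}(G)` on tuples `(λ_x : x ∈ R)`:
`(Λ·f)_x = ((λ_{y g_y⁻¹})^{g_y})^f` with `y = xf⁻¹`, written in left-action convention. -/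
def folderAct {X : Type*} (R : Set X) (gsel : X → Equiv.Perm X)
    (hgR : ∀ y : X, (gsel y)⁻¹ • y ∈ R)
    (Λ : R → Equiv.Perm X) (f : Equiv.Perm X) : R → Equiv.Perm X :=
  fun x =>
    f * (gsel (f⁻¹ • (x : X)) *
        Λ ⟨(gsel (f⁻¹ • (x : X)))⁻¹ • (f⁻¹ • (x : X)), hgR _⟩ *
        (gsel (f⁻¹ • (x : X)))⁻¹) * f⁻¹

/-!
Conjugation by `f ∈ N_{S_X}(G)` carries the class `λ^G` onto `(f λ f⁻¹)^G`, and a `G`-conjugate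
of `λ` has the same class. Since `y ↦ y g_y⁻¹` after `x ↦ x f⁻¹` maps the transversal onto
itself, the generating set `⋃ (Λ·f)_x^G` is the conjugate by `f` of `⋃ λ_x^G`. As conjugation
by `f` is an automorphism of `S_X` fixing `G`, `Λ·f` is an envelope iff `Λ` is.
-/

section FolderAction

variable {X : Type*} {G : Subgroup (Equiv.Perm X)} {R : Set X}

lemma conjClassOf_conj_of_mem {g : Equiv.Perm X} (hg : g ∈ G) (a : Equiv.Perm X) :
    conjClassOf G (g * a * g⁻¹) = conjClassOf G a := by
  ext h
  constructor
  · rintro ⟨k, hk, rfl⟩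
    exact ⟨k * g, G.mul_mem hk hg, by group⟩
  · rintro ⟨k, hk, rfl⟩
    exact ⟨k * g⁻¹, G.mul_mem hk (G.inv_mem hg), by group⟩

lemma conjClassOf_conj_of_mem_normalizer {f : Equiv.Perm X}
    (hf : f ∈ Subgroup.normalizer (G : Set (Equiv.Perm X))) (a : Equiv.Perm X) :
    conjClassOf G (f * a * f⁻¹) = MulAut.conj f '' conjClassOf G a := by
  have hfG : ∀ h, h ∈ G ↔ f * h * f⁻¹ ∈ G := Subgroup.mem_normalizer_iff.mp hf
  ext h
  constructor
  · rintro ⟨k, hk, rfl⟩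
    refine ⟨f⁻¹ * k * f * a * (f⁻¹ * k * f)⁻¹, ⟨f⁻¹ * k * f, ?_, rfl⟩, by simp; group⟩
    rwa [hfG, show f * (f⁻¹ * k * f) * f⁻¹ = k by group]
  · rintro ⟨_, ⟨k, hk, rfl⟩, rfl⟩
    exact ⟨f * k * f⁻¹, (hfG k).mp hk, by simp; group⟩

lemma IsTransversal.eq_of_smul_eq (hR : IsTransversal G R) {x z : X} (hx : x ∈ R) (hz : z ∈ R)
    {g : Equiv.Perm X} (hg : g ∈ G) (hgx : g • x = z) : x = z :=
  (hR x).unique ⟨hx, 1, G.one_mem, one_smul _ x⟩ ⟨hz, g, hg, hgx⟩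

def transversalRep (gsel : X → Equiv.Perm X) (hgR : ∀ y : X, (gsel y)⁻¹ • y ∈ R) (y : X) : R :=
  ⟨(gsel y)⁻¹ • y, hgR y⟩

lemma folderAct_apply (gsel : X → Equiv.Perm X) (hgR : ∀ y : X, (gsel y)⁻¹ • y ∈ R)
    (Λ : R → Equiv.Perm X) (f : Equiv.Perm X) (x : R) :
    folderAct R gsel hgR Λ f x =
      f * (gsel (f⁻¹ • (x : X)) * Λ (transversalRep gsel hgR (f⁻¹ • (x : X))) *
        (gsel (f⁻¹ • (x : X)))⁻¹) * f⁻¹ :=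
  rfl

lemma IsTransversal.surjective_transversalRep_inv_smul (hR : IsTransversal G R)
    {gsel : X → Equiv.Perm X} (hgG : ∀ y : X, gsel y ∈ G) (hgR : ∀ y : X, (gsel y)⁻¹ • y ∈ R)
    {f : Equiv.Perm X} (hf : f ∈ Subgroup.normalizer (G : Set (Equiv.Perm X))) :
    Function.Surjective fun x : R => transversalRep gsel hgR (f⁻¹ • (x : X)) := by
  intro z
  obtain ⟨x, ⟨hxR, g, hg, hgx⟩, -⟩ := hR (f • (z : X))
  have hg' : f⁻¹ * g * f ∈ G := by
    simpa using (Subgroup.mem_normalizer_iff.mp (inv_mem hf) g).mp hg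
  refine ⟨⟨x, hxR⟩, Subtype.ext (hR.eq_of_smul_eq z.2 (hgR _)
    (G.mul_mem (G.inv_mem (hgG (f⁻¹ • x))) hg') ?_).symm⟩
  simp [mul_smul, ← hgx]

lemma iUnion_conjClassOf_folderAct (hR : IsTransversal G R) {gsel : X → Equiv.Perm X}
    (hgG : ∀ y : X, gsel y ∈ G) (hgR : ∀ y : X, (gsel y)⁻¹ • y ∈ R) (Λ : R → Equiv.Perm X)
    {f : Equiv.Perm X} (hf : f ∈ Subgroup.normalizer (G : Set (Equiv.Perm X))) :
    ⋃ x : R, conjClassOf G (folderAct R gsel hgR Λ f x) =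
      MulAut.conj f '' ⋃ x : R, conjClassOf G (Λ x) := by
  simp_rw [folderAct_apply, conjClassOf_conj_of_mem_normalizer hf,
    conjClassOf_conj_of_mem (hgG _), Set.image_iUnion]
  exact (hR.surjective_transversalRep_inv_smul hgG hgR hf).iUnion_comp
    fun z => MulAut.conj f '' conjClassOf G (Λ z)

lemma generatesG_folderAct_iff (hR : IsTransversal G R) {gsel : X → Equiv.Perm X}
    (hgG : ∀ y : X, gsel y ∈ G) (hgR : ∀ y : X, (gsel y)⁻¹ • y ∈ R) (Λ : R → Equiv.Perm X)
    {f : Equiv.Perm X} (hf : f ∈ Subgroup.normalizer (G : Set (Equiv.Perm X))) :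
    GeneratesG G R (folderAct R gsel hgR Λ f) ↔ GeneratesG G R Λ := by
  have hGconj : G.map (MulAut.conj f).toMonoidHom = G :=
    Subgroup.mem_normalizer_iff_map_conj_eq.mp hf
  rw [GeneratesG, iUnion_conjClassOf_folderAct hR hgG hgR Λ hf, ← MulEquiv.coe_toMonoidHom,
    ← MonoidHom.map_closure]
  refine Iff.trans ?_
    (Subgroup.map_injective (f := (MulAut.conj f).toMonoidHom) (MulAut.conj f).injective).eq_iff
  rw [hGconj]

end FolderAction

theorem orbit_of_envelope_consists_of_envelopes_general {X : Type*}
    (G : Subgroup (Equiv.Perm X)) (R : Set X) (hR : IsTransversal G R)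
    (gsel : X → Equiv.Perm X) (hgG : ∀ y : X, gsel y ∈ G)
    (hgR : ∀ y : X, (gsel y)⁻¹ • y ∈ R) (Λ : R → Equiv.Perm X) :
    (IsRackFolder G R Λ → ∀ f ∈ Subgroup.normalizer (G : Set (Equiv.Perm X)), ∀ f' ∈ Subgroup.normalizer (G : Set (Equiv.Perm X)),
        GeneratesG G R (folderAct R gsel hgR Λ f) →
        GeneratesG G R (folderAct R gsel hgR Λ f')) ∧
    (IsQuandleFolder G R Λ → ∀ f ∈ Subgroup.normalizer (G : Set (Equiv.Perm X)), ∀ f' ∈ Subgroup.normalizer (G : Set (Equiv.Perm X)),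
        GeneratesG G R (folderAct R gsel hgR Λ f) →
        GeneratesG G R (folderAct R gsel hgR Λ f')) := by
  have orbit_invariant : ∀ f ∈ Subgroup.normalizer (G : Set (Equiv.Perm X)),
      ∀ f' ∈ Subgroup.normalizer (G : Set (Equiv.Perm X)),
      GeneratesG G R (folderAct R gsel hgR Λ f) → GeneratesG G R (folderAct R gsel hgR Λ f') :=
    fun f hf f' hf' h =>
      (generatesG_folderAct_iff hR hgG hgR Λ hf').mpr
        ((generatesG_folderAct_iff hR hgG hgR Λ hf).mp h)
  exact ⟨fun _ => orbit_invariant, fun _ => orbit_invariant⟩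

/-- Theorem `Th:Action`(iii): if an orbit of `N_{S_X}(G)` on the set of
rack folders over `G` contains a rack envelope, then the entire orbit consists of rack
envelopes; the same holds with "quandle" in place of "rack".  (The elements of the orbit
of a folder `Λ` are exactly the tuples `Λ·f`, `f ∈ N_{S_X}(G)`.) -/
theorem orbit_of_envelope_consists_of_envelopes {X : Type*} [Nonempty X]
    (G : Subgroup (Equiv.Perm X)) (R : Set X) (hR : IsTransversal G R)
    (gsel : X → Equiv.Perm X) (hgG : ∀ y : X, gsel y ∈ G)
    (hgR : ∀ y : X, (gsel y)⁻¹ • y ∈ R) (Λ : R → Equiv.Perm X) :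
    (IsRackFolder G R Λ → ∀ f ∈ Subgroup.normalizer (G : Set (Equiv.Perm X)), ∀ f' ∈ Subgroup.normalizer (G : Set (Equiv.Perm X)),
        GeneratesG G R (folderAct R gsel hgR Λ f) →
        GeneratesG G R (folderAct R gsel hgR Λ f')) ∧
    (IsQuandleFolder G R Λ → ∀ f ∈ Subgroup.normalizer (G : Set (Equiv.Perm X)), ∀ f' ∈ Subgroup.normalizer (G : Set (Equiv.Perm X)),
        GeneratesG G R (folderAct R gsel hgR Λ f) →
        GeneratesG G R (folderAct R gsel hgR Λ f')) :=
  orbit_of_envelope_consists_of_envelopes_general G R hR gsel hgG hgR Λ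
end

section
/- Let G ≤ S_X. If G is quandle admissible, i.e., there exists a quandle (X,*) with Lmlt(X,*) = G, then G is generated by the union over x ∈ X/G of the sets (Z(G_x))^G = { g⁻¹ c g : c ∈ Z(G_x), g ∈ G }. -/
lemma RackStr.L_apply {X : Type*} (Q : RackStr X) (x y : X) : Q.L x y = Q.op x y := rfl

lemma RackStr.L_mem_lmlt {X : Type*} (Q : RackStr X) (x : X) : Q.L x ∈ Q.lmlt :=
  Subgroup.subset_closure ⟨x, rfl⟩

/-- Conjugation in the left multiplication group: `g L_y g⁻¹ = L_{g y}`. -/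
lemma RackStr.conj_L {X : Type*} (Q : RackStr X) {g : Equiv.Perm X} (hg : g ∈ Q.lmlt) :
    ∀ y : X, g * Q.L y * g⁻¹ = Q.L (g y) := by
  induction hg using Subgroup.closure_induction with
  | mem a ha =>
    obtain ⟨x, rfl⟩ := ha
    intro y
    have key : Q.L x * Q.L y = Q.L (Q.op x y) * Q.L x := by
      ext z
      simp only [Equiv.Perm.mul_apply, RackStr.L_apply]
      exact Q.self_distrib x y z
    calc Q.L x * Q.L y * (Q.L x)⁻¹ = Q.L (Q.op x y) * Q.L x * (Q.L x)⁻¹ := by rw [key]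
      _ = Q.L (Q.op x y) := by group
      _ = Q.L (Q.L x y) := rfl
  | one => intro y; simp
  | mul a b _ _ iha ihb =>
    intro y
    have : a * b * Q.L y * (a * b)⁻¹ = a * (b * Q.L y * b⁻¹) * a⁻¹ := by group
    rw [this, ihb y, iha (b y)]
    rfl
  | inv a _ iha =>
    intro y
    have h1 := iha (a⁻¹ y)
    have h2 : a (a⁻¹ y) = y := by simp
    rw [h2] at h1
    calc a⁻¹ * Q.L y * (a⁻¹)⁻¹ = a⁻¹ * (a * Q.L (a⁻¹ y) * a⁻¹) * (a⁻¹)⁻¹ := by rw [h1]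
      _ = Q.L (a⁻¹ y) := by group

/-- Proposition `Pr:Admissible`, quandle case: if `G ≤ S_X` is quandle
admissible (there is a quandle `(X,*)` with `Lmlt(X,*) = G`), then `G` is generated by the
union over `x ∈ X/G` of the sets `(Z(G_x))^G = { g⁻¹ c g : c ∈ Z(G_x), g ∈ G }` (written
below in left-action convention). -/
theorem quandle_admissible_generates {X : Type*} (G : Subgroup (Equiv.Perm X)) (R : Set X)
    (hR : IsTransversal G R) (h : ∃ Q : QuandleStr X, Q.toRackStr.lmlt = G) :
    Subgroup.closure
      (⋃ x ∈ R, {h : Equiv.Perm X | ∃ c ∈ zStab G x, ∃ g ∈ G, h = g * c * g⁻¹}) = G := by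
  obtain ⟨Q, hQ⟩ := h
  subst hQ
  -- L_x ∈ Z(G_x) for every x
  have hLz : ∀ x : X, Q.toRackStr.L x ∈ zStab Q.toRackStr.lmlt x := by
    intro x
    have hLG : Q.toRackStr.L x ∈ Q.toRackStr.lmlt := Q.toRackStr.L_mem_lmlt x
    have hfix : Q.toRackStr.L x x = x := Q.idem x
    rw [zStab, Subgroup.mem_inf]
    refine ⟨⟨hLG, by simpa [Equiv.Perm.smul_def, RackStr.L_apply] using hfix⟩, ?_⟩
    rw [Subgroup.mem_centralizer_iff]
    intro h hh
    obtain ⟨hhG, hhfix⟩ := hh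
    have hhfix' : h x = x := hhfix
    have := Q.toRackStr.conj_L (g := h) hhG x
    rw [hhfix'] at this
    calc h * Q.toRackStr.L x = (h * Q.toRackStr.L x * h⁻¹) * h := by group
      _ = Q.toRackStr.L x * h := by rw [this]
  apply le_antisymm
  · rw [Subgroup.closure_le]
    rintro p hp
    simp only [Set.mem_iUnion] at hp
    obtain ⟨x, _, c, hc, g, hg, rfl⟩ := hp
    exact mul_mem (mul_mem hg hc.1.1) (inv_mem hg)
  · rw [RackStr.lmlt, Subgroup.closure_le]
    rintro p ⟨y, rfl⟩
    apply Subgroup.subset_closure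
    obtain ⟨x, ⟨hxR, g, hgG, hgy⟩, _⟩ := hR y
    have hgy' : g y = x := hgy
    have hconj := Q.toRackStr.conj_L (g := g) hgG y
    rw [hgy'] at hconj
    have : Q.toRackStr.L y = g⁻¹ * Q.toRackStr.L x * (g⁻¹)⁻¹ := by
      rw [← hconj]; group
    simp only [Set.mem_iUnion]
    exact ⟨x, hxR, Q.toRackStr.L x, hLz x, g⁻¹, inv_mem hgG, this⟩
end
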